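/- arXiv:2003.07633 — 3 statements merged into one kernel-verified Lean document; each statement's English description precedes it below -/
import Mathlib

section
/- Let O be a valuation ring whose residue characteristic is different from 2 (i.e., v(2) = 0, where v is the additive valuation), and let A, B, C, a, b, c ∈ O be such that each of the six sets {A,B,c}, {A,b,C}, {a,B,C}, {A,b,c}, {a,B,c}, {a,b,C} contains an element of valuation 0. Then at least one of the four invariants I_3, I_3', I_3'', I_6 has valuation 0 (equivalently, it is not the case that v(I_3), v(I_3'), v(I_3''), v(I_6) are all positive). -/
/-!
Pass to the residue ring `O/𝔪`, `𝔪 = {x | v x > 0}`, an integral domain in which `2 ≠ 0`;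
there the claim says that the four invariants cannot all vanish. If they do, then
`ABC = I₃ = 0` and `abc = I₃' - I₃'' + 8 I₃ = 0`, so some capital and some small letter vanish.
By cyclic symmetry `A = 0`. If `b = 0` then `I₃' = C c²`, and `c = 0` is symmetric; if `a = 0`
then `I₃' = B b² + C c²` and `I₆ = -4 B C (b c)²`. In every case the vanishing letters fill
one of the six sets of the normalization condition.
-/

namespace AddValuation

variable {R Γ₀ : Type*} [CommRing R] [LinearOrderedAddCommGroupWithTop Γ₀] (v : AddValuation R Γ₀)

def positiveIdeal (hv : ∀ x, 0 ≤ v x) : Ideal R where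
  carrier := {x | 0 < v x}
  zero_mem' := by simp [v.map_zero]
  add_mem' hx hy := v.map_lt_add hx hy
  smul_mem' r x hx := show 0 < v (r * x) by
    simpa only [v.map_mul] using hx.trans_le (le_add_of_nonneg_left (hv r))

theorem mem_positiveIdeal_iff (hv : ∀ x, 0 ≤ v x) {x : R} :
    x ∈ v.positiveIdeal hv ↔ v x ≠ 0 :=
  (hv x).lt_iff_ne'

theorem positiveIdeal_isPrime (hv : ∀ x, 0 ≤ v x) : (v.positiveIdeal hv).IsPrime where
  ne_top' h := (v.mem_positiveIdeal_iff hv).mp (h ▸ Submodule.mem_top) v.map_one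
  mem_or_mem' {x y} hxy := by
    simp only [mem_positiveIdeal_iff, v.map_mul] at hxy ⊢
    by_contra! h
    exact hxy (by rw [h.1, h.2, add_zero])

theorem residue_eq_zero_iff (hv : ∀ x, 0 ≤ v x) {x : R} :
    Ideal.Quotient.mk (v.positiveIdeal hv) x = 0 ↔ v x ≠ 0 := by
  rw [Ideal.Quotient.eq_zero_iff_mem, mem_positiveIdeal_iff]

theorem residue_ne_zero_iff (hv : ∀ x, 0 ≤ v x) {x : R} :
    Ideal.Quotient.mk (v.positiveIdeal hv) x ≠ 0 ↔ v x = 0 := by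
  rw [Ne, residue_eq_zero_iff, not_not]

end AddValuation

section Invariants

variable {R : Type*} [CommRing R]

def I₃ (A B C : R) : R := A * B * C

def I₃' (A B C a b c : R) : R :=
  A * (a ^ 2 - 4 * B * C) + B * (b ^ 2 - 4 * A * C) + C * (c ^ 2 - 4 * A * B)

def I₃'' (A B C a b c : R) : R :=
  -4 * A * B * C + A * a ^ 2 + B * b ^ 2 + C * c ^ 2 - a * b * c

def I₆ (A B C a b c : R) : R :=
  (a ^ 2 - 4 * B * C) * (b ^ 2 - 4 * A * C) * (c ^ 2 - 4 * A * B)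

theorem I₃_rotate (A B C : R) : I₃ A B C = I₃ B C A := by unfold I₃; ring

theorem I₃'_rotate (A B C a b c : R) : I₃' A B C a b c = I₃' B C A b c a := by unfold I₃'; ring

theorem I₆_rotate (A B C a b c : R) : I₆ A B C a b c = I₆ B C A b c a := by unfold I₆; ring

theorem mul_mul_eq_I₃'_sub_I₃''_add (A B C a b c : R) :
    a * b * c = I₃' A B C a b c - I₃'' A B C a b c + 8 * I₃ A B C := by
  unfold I₃ I₃' I₃''; ring

variable {S : Type*} [CommRing S] (f : R →+* S) (A B C a b c : R)

theorem map_I₃ : f (I₃ A B C) = I₃ (f A) (f B) (f C) := by simp [I₃]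

theorem map_I₃' : f (I₃' A B C a b c) = I₃' (f A) (f B) (f C) (f a) (f b) (f c) := by
  simp [I₃', map_ofNat]

theorem map_I₃'' : f (I₃'' A B C a b c) = I₃'' (f A) (f B) (f C) (f a) (f b) (f c) := by
  simp [I₃'', map_ofNat]

theorem map_I₆ : f (I₆ A B C a b c) = I₆ (f A) (f B) (f C) (f a) (f b) (f c) := by
  simp [I₆, map_ofNat]

end Invariants

def IsNormalized {R : Type*} [Zero R] (A B C a b c : R) : Prop :=
  (A ≠ 0 ∨ B ≠ 0 ∨ c ≠ 0) ∧ (A ≠ 0 ∨ b ≠ 0 ∨ C ≠ 0) ∧ (a ≠ 0 ∨ B ≠ 0 ∨ C ≠ 0) ∧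
    (A ≠ 0 ∨ b ≠ 0 ∨ c ≠ 0) ∧ (a ≠ 0 ∨ B ≠ 0 ∨ c ≠ 0) ∧ (a ≠ 0 ∨ b ≠ 0 ∨ C ≠ 0)

theorem IsNormalized.rotate {R : Type*} [Zero R] {A B C a b c : R}
    (h : IsNormalized A B C a b c) : IsNormalized B C A b c a := by
  obtain ⟨h₁, h₂, h₃, h₄, h₅, h₆⟩ := h
  refine ⟨?_, ?_, ?_, ?_, ?_, ?_⟩ <;> grind

section NoZeroDivisors

variable {R : Type*} [CommRing R] [NoZeroDivisors R] {A B C a b c : R}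

theorem eq_zero_or_eq_zero_of_mul_sq_add_mul_sq (h : B * b ^ 2 + C * c ^ 2 = 0)
    (h' : B * C * (b * c) ^ 2 = 0) : (B = 0 ∨ b = 0) ∧ (C = 0 ∨ c = 0) := by
  have : B = 0 ∨ C = 0 ∨ b = 0 ∨ c = 0 := by simpa [or_assoc] using h'
  rcases this with rfl | rfl | rfl | rfl <;> simp_all

theorem IsNormalized.false_of_vanishing (hN : IsNormalized A B C a b c) (h2 : (2 : R) ≠ 0)
    (hABC : I₃ A B C = 0) (habc : a * b * c = 0) (hI₃' : I₃' A B C a b c = 0)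
    (hI₆ : I₆ A B C a b c = 0) : False := by
  wlog hA : A = 0 generalizing A B C a b c
  · have hBC : B = 0 ∨ C = 0 := by simpa [I₃, hA, mul_assoc] using hABC
    rcases hBC with hB | hC
    · exact this hN.rotate (by rwa [← I₃_rotate]) (by linear_combination habc)
        (by rwa [← I₃'_rotate]) (by rwa [← I₆_rotate]) hB
    · exact this hN.rotate.rotate (by rwa [← I₃_rotate, ← I₃_rotate])
        (by linear_combination habc) (by rwa [← I₃'_rotate, ← I₃'_rotate])
        (by rwa [← I₆_rotate, ← I₆_rotate]) hC
  subst hA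
  obtain ⟨h₁, h₂, h₃, h₄, h₅, h₆⟩ := hN
  rcases mul_eq_zero.mp habc with hab | rfl
  rcases mul_eq_zero.mp hab with rfl | rfl
  · have hsum : B * b ^ 2 + C * c ^ 2 = 0 := by simpa [I₃'] using hI₃'
    have hprod : B * C * (b * c) ^ 2 = 0 := by
      have : (2 * 2) * (B * C * (b * c) ^ 2) = 0 := by unfold I₆ at hI₆; linear_combination -hI₆
      simpa [h2] using this
    obtain ⟨rfl | rfl, rfl | rfl⟩ := eq_zero_or_eq_zero_of_mul_sq_add_mul_sq hsum hprod <;>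
      simp_all
  · have : C * c ^ 2 = 0 := by simpa [I₃'] using hI₃'
    simp_all
  · have : B * b ^ 2 = 0 := by simpa [I₃'] using hI₃'
    simp_all

theorem IsNormalized.not_invariants_vanish (hN : IsNormalized A B C a b c) (h2 : (2 : R) ≠ 0) :
    ¬(I₃ A B C = 0 ∧ I₃' A B C a b c = 0 ∧ I₃'' A B C a b c = 0 ∧ I₆ A B C a b c = 0) := by
  rintro ⟨hI₃, hI₃', hI₃'', hI₆⟩
  refine hN.false_of_vanishing h2 hI₃ ?_ hI₃' hI₆
  rw [mul_mul_eq_I₃'_sub_I₃''_add, hI₃, hI₃', hI₃'', sub_zero, mul_zero, add_zero]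

end NoZeroDivisors

theorem stmt_2_general {O : Type*} [CommRing O] {Γ : Type*} [AddCommGroup Γ] [LinearOrder Γ] [IsOrderedAddMonoid Γ]
    (v : AddValuation O (WithTop Γ))
    (hnonneg : ∀ x : O, 0 ≤ v x)
    (h2 : v 2 = 0)
    (A B C a b c : O)
    (h1 : v A = 0 ∨ v B = 0 ∨ v c = 0)
    (h2' : v A = 0 ∨ v b = 0 ∨ v C = 0)
    (h3 : v a = 0 ∨ v B = 0 ∨ v C = 0)
    (h4 : v A = 0 ∨ v b = 0 ∨ v c = 0)
    (h5 : v a = 0 ∨ v B = 0 ∨ v c = 0)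
    (h6 : v a = 0 ∨ v b = 0 ∨ v C = 0) :
    v (A*B*C) = 0 ∨
    v (A*(a^2 - 4*B*C) + B*(b^2 - 4*A*C) + C*(c^2 - 4*A*B)) = 0 ∨
    v (-4*A*B*C + A*a^2 + B*b^2 + C*c^2 - a*b*c) = 0 ∨
    v ((a^2 - 4*B*C)*(b^2 - 4*A*C)*(c^2 - 4*A*B)) = 0 := by
  have := v.positiveIdeal_isPrime hnonneg
  let π := Ideal.Quotient.mk (v.positiveIdeal hnonneg)
  have hπ (x : O) : π x ≠ 0 ↔ v x = 0 := v.residue_ne_zero_iff hnonneg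
  have hπ₀ (x : O) : π x = 0 ↔ v x ≠ 0 := v.residue_eq_zero_iff hnonneg
  have hN : IsNormalized (π A) (π B) (π C) (π a) (π b) (π c) := by
    simp only [IsNormalized, hπ]
    exact ⟨h1, h2', h3, h4, h5, h6⟩
  have h2π : (2 : O ⧸ v.positiveIdeal hnonneg) ≠ 0 := by
    simpa only [map_ofNat] using (hπ 2).mpr h2
  by_contra! h
  apply hN.not_invariants_vanish h2π
  rw [← map_I₃, ← map_I₃', ← map_I₃'', ← map_I₆]
  simp only [hπ₀]
  exact h

/-- Corollary (COR:Normalization_Invariants): if the coefficients of the quartic are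
normalized as in Proposition (norm1) (each of the six sets `{A,B,c}`, `{A,b,C}`,
`{a,B,C}`, `{A,b,c}`, `{a,B,c}`, `{a,b,C}` contains an element of valuation `0`),
and the residue characteristic is different from `2`, then at least one of the
invariants `I₃, I₃', I₃'', I₆` has valuation `0`. -/
theorem stmt_2 {O : Type*} [CommRing O] {Γ : Type*} [AddCommGroup Γ] [LinearOrder Γ] [IsOrderedAddMonoid Γ]
    (v : AddValuation O (WithTop Γ))
    (hnonneg : ∀ x : O, 0 ≤ v x) (htop : ∀ x : O, v x = ⊤ ↔ x = 0)
    (h2 : v 2 = 0)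
    (A B C a b c : O)
    (h1 : v A = 0 ∨ v B = 0 ∨ v c = 0)
    (h2' : v A = 0 ∨ v b = 0 ∨ v C = 0)
    (h3 : v a = 0 ∨ v B = 0 ∨ v C = 0)
    (h4 : v A = 0 ∨ v b = 0 ∨ v c = 0)
    (h5 : v a = 0 ∨ v B = 0 ∨ v c = 0)
    (h6 : v a = 0 ∨ v b = 0 ∨ v C = 0) :
    v (A*B*C) = 0 ∨
    v (A*(a^2 - 4*B*C) + B*(b^2 - 4*A*C) + C*(c^2 - 4*A*B)) = 0 ∨
    v (-4*A*B*C + A*a^2 + B*b^2 + C*c^2 - a*b*c) = 0 ∨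
    v ((a^2 - 4*B*C)*(b^2 - 4*A*C)*(c^2 - 4*A*B)) = 0 :=
  stmt_2_general v hnonneg h2 A B C a b c h1 h2' h3 h4 h5 h6
end

section
/- Let K be a field of characteristic different from 2 and let G be the group of K-algebra automorphisms of the polynomial ring K[a, b, c] generated by the three substitutions σ: (a, b, c) ↦ (b, c, a), τ: (a, b, c) ↦ (b, a, c), and ρ: (a, b, c) ↦ (−a, −b, c). Then the subalgebra of G-invariant polynomials K[a, b, c]^G equals the K-subalgebra generated by the three polynomials a^2 + b^2 + c^2, abc, and a^2 b^2 + a^2 c^2 + b^2 c^2. -/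
open MvPolynomial

/-- The substitution `σ : (a, b, c) ↦ (b, c, a)` as a `K`-algebra automorphism of
`K[a,b,c]`. -/
noncomputable def sigmaAut (K : Type*) [CommRing K] :
    MvPolynomial (Fin 3) K ≃ₐ[K] MvPolynomial (Fin 3) K :=
  renameEquiv K (finRotate 3)

/-- The substitution `τ : (a, b, c) ↦ (b, a, c)` as a `K`-algebra automorphism of
`K[a,b,c]`. -/
noncomputable def tauAut (K : Type*) [CommRing K] :
    MvPolynomial (Fin 3) K ≃ₐ[K] MvPolynomial (Fin 3) K :=
  renameEquiv K (Equiv.swap (0 : Fin 3) 1)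

/-- The substitution `ρ : (a, b, c) ↦ (−a, −b, c)` as a `K`-algebra automorphism of
`K[a,b,c]`. -/
noncomputable def rhoAut (K : Type*) [CommRing K] :
    MvPolynomial (Fin 3) K ≃ₐ[K] MvPolynomial (Fin 3) K :=
  AlgEquiv.ofAlgHom
    (aeval fun i : Fin 3 => if i.val = 2 then X i else -X i)
    (aeval fun i : Fin 3 => if i.val = 2 then X i else -X i)
    (by apply MvPolynomial.algHom_ext; intro i; fin_cases i <;> simp)
    (by apply MvPolynomial.algHom_ext; intro i; fin_cases i <;> simp)

/-!
`σ` and `τ` generate all permutations of the variables, so an invariant `p` is symmetric. Then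
`ρ`-invariance says that `p` is also fixed by negating any two of the variables, so (as `2 ≠ 0`)
the three exponents of each monomial of `p` have the same parity. Collecting the monomials with
even and with odd exponents writes `p = P(a², b², c²) + abc · Q(a², b², c²)` with `P` and `Q`
symmetric. By the fundamental theorem on symmetric polynomials, `P(a², b², c²)` and
`Q(a², b², c²)` are polynomials in the elementary symmetric functions of `a², b², c²`, which are
the first and third generator and `(abc)²`.
-/
theorem AlgEquiv.forall_mem_closure_apply_eq_self_iff {R A : Type*} [CommSemiring R] [Semiring A]
    [Algebra R A] (S : Set (A ≃ₐ[R] A)) (a : A) :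
    (∀ g ∈ Subgroup.closure S, g a = a) ↔ ∀ g ∈ S, g a = a := by
  have h := Subgroup.closure_le (K := MulAction.stabilizer (A ≃ₐ[R] A) a) (k := S)
  simp only [SetLike.le_def, Set.subset_def, SetLike.mem_coe, MulAction.mem_stabilizer_iff,
    AlgEquiv.smul_def] at h
  exact h

theorem AlgEquiv.apply_eq_self_of_mem_adjoin {R A : Type*} [CommSemiring R] [Semiring A]
    [Algebra R A] (g : A ≃ₐ[R] A) {S : Set A} (hS : ∀ s ∈ S, g s = s) {a : A}
    (ha : a ∈ Algebra.adjoin R S) : g a = a :=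
  Algebra.adjoin_le (S := AlgHom.equalizer (g : A →ₐ[R] A) (AlgHom.id R A)) hS ha

theorem Finsupp.exists_eq_add_two_nsmul {σ : Type*} {u m : σ →₀ ℕ}
    (h : ∀ i, u i ≤ m i ∧ Even (m i - u i)) : ∃ k, m = u + 2 • k := by
  refine ⟨(m - u).mapRange (· / 2) (Nat.zero_div 2), ?_⟩
  ext i
  obtain ⟨hle, r, hr⟩ := h i
  simp only [Finsupp.coe_add, Pi.add_apply, Finsupp.smul_apply, Finsupp.mapRange_apply,
    smul_eq_mul, Finsupp.tsub_apply]
  omega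

namespace MvPolynomial

section General

variable {σ R : Type*}

theorem IsSymmetric.coeff_mapDomain [CommSemiring R] {p : MvPolynomial σ R} (hp : p.IsSymmetric)
    (e : Equiv.Perm σ) (m : σ →₀ ℕ) : coeff (m.mapDomain e) p = coeff m p := by
  conv_lhs => rw [← hp e]
  exact coeff_rename_mapDomain _ e.injective _ _

theorem IsSymmetric.mem_adjoin_esymm [CommRing R] [Fintype σ] {n : ℕ}
    (hn : Fintype.card σ ≤ n) {p : MvPolynomial σ R} (hp : p.IsSymmetric) :
    p ∈ Algebra.adjoin R (Set.range fun i : Fin n => esymm σ R (i + 1)) := by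
  obtain ⟨q, hq⟩ := esymmAlgHom_surjective R hn ⟨p, (mem_symmetricSubalgebra p).mpr hp⟩
  rw [Algebra.adjoin_range_eq_range_aeval]
  exact ⟨q, (esymmAlgHom_apply q).symm.trans (congrArg Subtype.val hq)⟩

theorem IsSymmetric.of_expand [CommSemiring R] {n : ℕ} (hn : 0 < n) {p : MvPolynomial σ R}
    (hp : (expand n p).IsSymmetric) : p.IsSymmetric := fun e =>
  expand_injective hn (by rw [← rename_expand, hp e])

theorem IsSymmetric.of_mul_left [CommRing R] [IsDomain R] {p q : MvPolynomial σ R}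
    (hp : p.IsSymmetric) (hp0 : p ≠ 0) (hpq : (p * q).IsSymmetric) : q.IsSymmetric := fun e =>
  mul_left_cancel₀ hp0 (by rw [← hpq e, map_mul, hp e])

theorem coeff_aeval_C_mul_X [CommSemiring R] (s : σ → R) (p : MvPolynomial σ R) (m : σ →₀ ℕ) :
    coeff m (aeval (fun i => C (s i) * X i) p) = (m.prod fun i k => s i ^ k) * coeff m p := by
  induction p using induction_on' with
  | monomial d a =>
    classical
    have : aeval (fun i => C (s i) * X i) (monomial d a) =
        monomial d ((d.prod fun i k => s i ^ k) * a) := by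
      rw [aeval_monomial]
      simp only [monomial_eq, algebraMap_eq, Finsupp.prod, mul_pow,
        Finset.prod_mul_distrib, map_prod, C_pow, C_mul]
      ring
    rw [this, coeff_monomial, coeff_monomial]
    split_ifs with h <;> simp [h, mul_comm]
  | add p q hp hq => simp only [map_add, coeff_add, hp, hq, mul_add]

theorem prod_pow_eq_one_of_aeval_C_mul_X_eq_self [CommRing R] [IsDomain R] {s : σ → R}
    {p : MvPolynomial σ R} (hp : aeval (fun i => C (s i) * X i) p = p) {m : σ →₀ ℕ}
    (hm : m ∈ p.support) : (m.prod fun i k => s i ^ k) = 1 := by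
  have h := coeff_aeval_C_mul_X s p m
  rw [hp] at h
  exact (mul_eq_right₀ (mem_support_iff.mp hm)).mp h.symm

variable [CommSemiring R] (S : (σ →₀ ℕ) → Prop) [DecidablePred S]

noncomputable def restrictMonomials (p : MvPolynomial σ R) : MvPolynomial σ R :=
  ∑ m ∈ p.support with S m, monomial m (coeff m p)

theorem coeff_restrictMonomials (p : MvPolynomial σ R) (m : σ →₀ ℕ) :
    coeff m (restrictMonomials S p) = if S m then coeff m p else 0 := by
  classical
  simp only [restrictMonomials, coeff_sum, coeff_monomial, Finset.sum_ite_eq', Finset.mem_filter,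
    mem_support_iff]
  by_cases h : coeff m p = 0 <;> simp [h]

theorem rename_restrictMonomials (e : σ ≃ σ) (hS : ∀ m, S (m.mapDomain e) ↔ S m)
    {p : MvPolynomial σ R} (hp : rename e p = p) :
    rename e (restrictMonomials S p) = restrictMonomials S p := by
  ext m
  obtain ⟨d, rfl⟩ : ∃ d, m = d.mapDomain e :=
    ⟨m.mapDomain e.symm, by rw [← Finsupp.mapDomain_comp, e.self_comp_symm, Finsupp.mapDomain_id]⟩
  conv_rhs => rw [← hp]
  simp only [coeff_rename_mapDomain _ e.injective, coeff_restrictMonomials, hS]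

theorem exists_eq_monomial_mul_expand (n : ℕ) (u : σ →₀ ℕ) (q : MvPolynomial σ R)
    (h : ∀ m ∈ q.support, ∃ k, m = u + n • k) : ∃ Q, q = monomial u 1 * expand n Q := by
  choose! k hk using h
  refine ⟨∑ m ∈ q.support, monomial (k m) (coeff m q), ?_⟩
  simp only [map_sum, Finset.mul_sum, expand_monomial, monomial_mul, one_mul]
  conv_lhs => rw [q.as_sum]
  exact Finset.sum_congr rfl fun m hm => by rw [← hk m hm]

end General

end MvPolynomial

def invariantGenerators (K : Type*) [Field K] : Set (MvPolynomial (Fin 3) K) :=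
  {(X 0)^2 + (X 1)^2 + (X 2)^2,
   (X 0) * (X 1) * (X 2),
   (X 0)^2 * (X 1)^2 + (X 0)^2 * (X 2)^2 + (X 1)^2 * (X 2)^2}

section Ternary

variable {K : Type*} [Field K]

theorem sigmaAut_X (i : Fin 3) : sigmaAut K (X i) = X (finRotate 3 i) := rename_X _ _

theorem tauAut_X (i : Fin 3) : tauAut K (X i) = X (Equiv.swap 0 1 i) := rename_X _ _

theorem rhoAut_X (i : Fin 3) : rhoAut K (X i) = if i.val = 2 then X i else -X i := aeval_X _ _

theorem apply_eq_self_of_mem_invariantGenerators {g : MvPolynomial (Fin 3) K ≃ₐ[K] _}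
    (hg : g ∈ ({sigmaAut K, tauAut K, rhoAut K} : Set _)) {x : MvPolynomial (Fin 3) K}
    (hx : x ∈ invariantGenerators K) : g x = x := by
  rcases hg with rfl | rfl | rfl <;> rcases hx with rfl | rfl | rfl <;>
    simp [sigmaAut_X, tauAut_X, rhoAut_X, Equiv.swap_apply_of_ne_of_ne] <;> ring

theorem esymm_fin_three_two :
    esymm (Fin 3) K 2 = X 0 * X 1 + X 0 * X 2 + X 1 * X 2 := by
  simp [esymm_eq_multiset_esymm, Fin.univ_val_map, Multiset.esymm, Multiset.powersetCard_coe,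
    List.sublistsLen, List.sublistsLenAux]
  ring

theorem esymm_fin_three_three : esymm (Fin 3) K 3 = X 0 * X 1 * X 2 := by
  simp [esymm_eq_multiset_esymm, Fin.univ_val_map, Multiset.esymm, Multiset.powersetCard_coe,
    List.sublistsLen, List.sublistsLenAux, mul_assoc]

theorem expand_two_esymm_mem_adjoin (i : Fin 3) :
    expand 2 (esymm (Fin 3) K (i + 1)) ∈ Algebra.adjoin K (invariantGenerators K) := by
  have mem : ∀ x ∈ invariantGenerators K, x ∈ Algebra.adjoin K (invariantGenerators K) :=
    fun _ => (Algebra.subset_adjoin ·)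
  fin_cases i
  · show expand 2 (esymm (Fin 3) K 1) ∈ _
    simp only [esymm_one, Fin.sum_univ_three, map_add, expand_X]
    exact mem _ (Set.mem_insert _ _)
  · show expand 2 (esymm (Fin 3) K 2) ∈ _
    simp only [esymm_fin_three_two, map_add, map_mul, expand_X]
    exact mem _ (Set.mem_insert_of_mem _ (Set.mem_insert_of_mem _ (Set.mem_singleton _)))
  · show expand 2 (esymm (Fin 3) K 3) ∈ _
    simp only [esymm_fin_three_three, map_mul, expand_X, ← mul_pow]
    exact Subalgebra.pow_mem _ (mem _ (Set.mem_insert_of_mem _ (Set.mem_insert _ _))) 2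

theorem expand_two_mem_adjoin_of_isSymmetric {p : MvPolynomial (Fin 3) K} (hp : p.IsSymmetric) :
    expand 2 p ∈ Algebra.adjoin K (invariantGenerators K) := by
  have h : expand 2 p ∈ (Algebra.adjoin K _).map (expand 2) := Subalgebra.mem_map.mpr
    ⟨p, hp.mem_adjoin_esymm (R := K) (Fintype.card_fin 3).le, rfl⟩
  rw [← Algebra.adjoin_image, ← Set.range_comp] at h
  exact Algebra.adjoin_le (Set.range_subset_iff.mpr expand_two_esymm_mem_adjoin) h


theorem isSymmetric_of_sigmaAut_tauAut {p : MvPolynomial (Fin 3) K} (hσ : sigmaAut K p = p)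
    (hτ : tauAut K p = p) : p.IsSymmetric := by
  have hgen : Subgroup.closure {finRotate 3, Equiv.swap (0 : Fin 3) 1} = ⊤ := by
    simpa using Equiv.Perm.closure_cycle_adjacent_swap (isCycle_finRotate (n := 1))
      support_finRotate 0
  intro e
  induction (hgen ▸ Subgroup.mem_top e : e ∈ Subgroup.closure _) using
    Subgroup.closure_induction with
  | mem e he =>
    rcases he with rfl | rfl
    exacts [hσ, hτ]
  | one => exact rename_id_apply p
  | mul e f _ _ he hf => rw [Equiv.Perm.coe_mul, ← rename_rename, hf, he]
  | inv e _ he =>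
    conv_lhs => rw [← he]
    rw [rename_rename, ← Equiv.Perm.coe_mul, inv_mul_cancel, Equiv.Perm.coe_one, rename_id_apply]

theorem rhoAut_apply (p : MvPolynomial (Fin 3) K) :
    rhoAut K p = aeval (fun i => C (![-1, -1, 1] i) * X i) p := by
  show aeval _ p = _
  congr
  funext i
  fin_cases i <;> simp

theorem even_add_of_rhoAut_eq_self (hK : (2 : K) ≠ 0) {p : MvPolynomial (Fin 3) K}
    (hρ : rhoAut K p = p) {m : Fin 3 →₀ ℕ} (hm : m ∈ p.support) : Even (m 0 + m 1) := by
  rw [rhoAut_apply] at hρ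
  have h := prod_pow_eq_one_of_aeval_C_mul_X_eq_self hρ hm
  rw [Finsupp.prod_fintype _ _ (fun _ => pow_zero _), Fin.prod_univ_three] at h
  simp only [Matrix.cons_val_zero, Matrix.cons_val_one, Matrix.cons_val_two, Matrix.head_cons,
    Matrix.tail_cons, one_pow, mul_one, ← pow_add] at h
  exact (neg_one_pow_eq_one_iff_even (fun h1 => hK (by linear_combination -h1))).mp h

theorem forall_even_or_forall_odd_of_mem_support (hK : (2 : K) ≠ 0) {p : MvPolynomial (Fin 3) K}
    (hp : p.IsSymmetric) (hρ : rhoAut K p = p) {m : Fin 3 →₀ ℕ} (hm : m ∈ p.support) :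
    (∀ i, Even (m i)) ∨ ∀ i, Odd (m i) := by
  have h01 := even_add_of_rhoAut_eq_self hK hρ hm
  have h12 : Even (m 1 + m 2) := by
    have hm' : m.mapDomain (finRotate 3).symm ∈ p.support := by
      rwa [mem_support_iff, hp.coeff_mapDomain, ← mem_support_iff]
    simpa [Finsupp.mapDomain_equiv_apply] using even_add_of_rhoAut_eq_self hK hρ hm'
  rw [Nat.even_add] at h01 h12
  rcases Nat.even_or_odd (m 0) with h0 | h0
  · left
    intro i
    fin_cases i <;> tauto
  · right
    intro i
    simp only [← Nat.not_even_iff_odd] at h0 ⊢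
    fin_cases i <;> tauto

theorem mem_adjoin_invariantGenerators_of_isSymmetric (hK : (2 : K) ≠ 0)
    {p : MvPolynomial (Fin 3) K} (hp : p.IsSymmetric) (hρ : rhoAut K p = p) :
    p ∈ Algebra.adjoin K (invariantGenerators K) := by
  classical
  set pe := restrictMonomials (fun m => ∀ i, Even (m i)) p
  set u : Fin 3 →₀ ℕ := Finsupp.equivFunOnFinite.symm 1
  have hpe : pe.IsSymmetric := fun e => rename_restrictMonomials _ e (fun m => by
      simpa only [Finsupp.mapDomain_equiv_apply] using
        e.symm.forall_congr_right (q := fun i => Even (m i))) (hp e)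
  obtain ⟨P, hP⟩ := exists_eq_monomial_mul_expand 2 0 pe fun m hm => by
    rw [mem_support_iff, coeff_restrictMonomials, ite_ne_right_iff] at hm
    exact Finsupp.exists_eq_add_two_nsmul fun i => ⟨Nat.zero_le _, by simpa using hm.1 i⟩
  obtain ⟨Q, hQ⟩ := exists_eq_monomial_mul_expand 2 u (p - pe) fun m hm => by
    rw [mem_support_iff, coeff_sub, coeff_restrictMonomials] at hm
    split_ifs at hm with heven
    · exact absurd (sub_self _) hm
    have hodd := (forall_even_or_forall_odd_of_mem_support hK hp hρ (mem_support_iff.mpr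
      (by simpa using hm))).resolve_left heven
    refine Finsupp.exists_eq_add_two_nsmul fun i => ?_
    obtain ⟨r, hr⟩ := hodd i
    exact ⟨by simp [u]; omega, ⟨r, by simp [u]; omega⟩⟩
  have hu : monomial u (1 : K) = X 0 * X 1 * X 2 := by
    simp [u, monomial_eq, Finsupp.prod_fintype, Fin.prod_univ_three]
  rw [monomial_zero', C_1, one_mul] at hP
  rw [hu] at hQ
  have hPsym : P.IsSymmetric := .of_expand two_pos (hP ▸ hpe)
  have hQsym : Q.IsSymmetric := .of_expand two_pos <| .of_mul_left
    (esymm_fin_three_three (K := K) ▸ esymm_isSymmetric _ _ 3)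
    (mul_ne_zero (mul_ne_zero (X_ne_zero _) (X_ne_zero _)) (X_ne_zero _)) (hQ ▸ hp.sub hpe)
  rw [← sub_add_cancel p pe, hQ, hP]
  exact Subalgebra.add_mem _ (Subalgebra.mul_mem _
    (Algebra.subset_adjoin (Set.mem_insert_of_mem _ (Set.mem_insert _ _)))
    (expand_two_mem_adjoin_of_isSymmetric hQsym)) (expand_two_mem_adjoin_of_isSymmetric hPsym)

end Ternary

/-- Proposition (Prop:Invariants_Generate): over a field of characteristic different
from `2`, the algebra of polynomials in `K[a,b,c]` invariant under the group `G`
generated by `σ, τ, ρ` is generated by `a² + b² + c²`, `abc` and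
`a²b² + a²c² + b²c²`. -/
theorem stmt_5 (K : Type*) [Field K] (hK : (2 : K) ≠ 0)
    (p : MvPolynomial (Fin 3) K) :
    (∀ g ∈ Subgroup.closure {sigmaAut K, tauAut K, rhoAut K}, g p = p) ↔
      p ∈ Algebra.adjoin K
        {(X 0)^2 + (X 1)^2 + (X 2)^2,
         (X 0) * (X 1) * (X 2),
         (X 0)^2 * (X 1)^2 + (X 0)^2 * (X 2)^2 + (X 1)^2 * (X 2)^2} := by
  rw [AlgEquiv.forall_mem_closure_apply_eq_self_iff]
  constructor
  · intro h
    exact mem_adjoin_invariantGenerators_of_isSymmetric hK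
      (isSymmetric_of_sigmaAut_tauAut (h _ (by simp)) (h _ (by simp))) (h _ (by simp))
  · intro hp g hg
    exact g.apply_eq_self_of_mem_adjoin (fun x => apply_eq_self_of_mem_invariantGenerators hg) hp
end

section
/- Let O be a valuation ring with additive valuation v whose residue characteristic is different from 2 (i.e., v(2) = 0), and let M, N ∈ O. Set L_1 = N + 10, L_2 = M^2 − 4N + 8, L_3 = (2M + N + 2)(2M − N − 2). If 2·v(L_1) ≥ v(L_2) and 3·v(L_2) = 2·v(L_3), then v(L_2) = v(L_3) = 0; consequently v(2^4·L_2^4·L_3^2) = 0, i.e., the discriminant Δ(Y) = 2^4 L_2^4 L_3^2 of the hyperelliptic curve is a unit. -/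
/-!
`(N - 6)² = 4 L₂ - L₃` and `N + 10 = (N - 6) + 2⁴`. If `v(L₂) > 0`, then `v(L₃) > 0`
by `3 v(L₂) = 2 v(L₃)`, so `N - 6` lies in the maximal ideal and `N + 10 ≡ 2⁴` is a unit;
then `v(L₂) ≤ 2 v(L₁) = 0`, a contradiction. With `v(L₂) = 0`, the relation gives `v(L₃) = 0`.
-/

theorem nsmul_eq_zero_iff_of_ne_zero {M : Type*} [AddMonoid M] [LinearOrder M] [AddLeftMono M]
    {a : M} {n : ℕ} (hn : n ≠ 0) : n • a = 0 ↔ a = 0 := by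
  simp only [le_antisymm_iff, nsmul_nonpos_iff hn, nsmul_nonneg_iff hn]

namespace AddValuation

variable {R Γ₀ : Type*} [Ring R] [LinearOrderedAddCommMonoidWithTop Γ₀] (v : AddValuation R Γ₀)

theorem map_pow_pos_iff {x : R} {n : ℕ} (hn : n ≠ 0) : 0 < v (x ^ n) ↔ 0 < v x := by
  rw [v.map_pow, nsmul_pos_iff hn]

theorem map_sub_pos {x y : R} (hx : 0 < v x) (hy : 0 < v y) : 0 < v (x - y) :=
  (lt_min hx hy).trans_le (v.map_sub x y)

theorem map_add_eq_zero_of_pos {x y : R} (hx : 0 < v x) (hy : v y = 0) : v (x + y) = 0 := by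
  rw [v.map_add_eq_of_lt_right (hy ▸ hx), hy]

end AddValuation

theorem AddValuation.map_sq_sub_four_mul_add_eight_eq_zero {O Γ : Type*} [CommRing O]
    [AddCommGroup Γ] [LinearOrder Γ] [IsOrderedAddMonoid Γ] (v : AddValuation O (WithTop Γ))
    (hnonneg : ∀ x : O, 0 ≤ v x) (h2 : v 2 = 0) {M N : O}
    (h1 : v (M^2 - 4*N + 8) ≤ 2 • v (N + 10))
    (h3 : 3 • v (M^2 - 4*N + 8) = 2 • v ((2*M + N + 2) * (2*M - N - 2))) :
    v (M^2 - 4*N + 8) = 0 := by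
  have hv2pow (k : ℕ) : v (2 ^ k) = 0 := by rw [v.map_pow, h2, nsmul_zero]
  by_contra hne
  have ha : 0 < v (M^2 - 4*N + 8) := (hnonneg _).lt_of_ne' hne
  have hb : 0 < v ((2*M + N + 2) * (2*M - N - 2)) := by
    rw [← nsmul_pos_iff two_ne_zero, ← h3, nsmul_pos_iff three_ne_zero]
    exact ha
  have hN6 : 0 < v (N - 6) := by
    rw [← v.map_pow_pos_iff two_ne_zero,
      show (N - 6)^2 = 2^2 * (M^2 - 4*N + 8) - (2*M + N + 2) * (2*M - N - 2) by ring]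
    refine v.map_sub_pos ?_ hb
    rwa [v.map_mul, hv2pow, zero_add]
  have hL1 : v (N + 10) = 0 := by
    rw [show N + 10 = (N - 6) + 2^4 by ring]
    exact v.map_add_eq_zero_of_pos hN6 (hv2pow 4)
  rw [hL1, smul_zero] at h1
  exact ha.not_ge h1

theorem stmt_14_general {O : Type*} [CommRing O] {Γ : Type*} [AddCommGroup Γ] [LinearOrder Γ] [IsOrderedAddMonoid Γ]
    (v : AddValuation O (WithTop Γ))
    (hnonneg : ∀ x : O, 0 ≤ v x)
    (h2 : v 2 = 0) (M N : O)
    (h1 : v (M^2 - 4*N + 8) ≤ 2 • v (N + 10))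
    (h3 : 3 • v (M^2 - 4*N + 8) = 2 • v ((2*M + N + 2) * (2*M - N - 2))) :
    v (M^2 - 4*N + 8) = 0 ∧ v ((2*M + N + 2) * (2*M - N - 2)) = 0 ∧
      v (2^4 * (M^2 - 4*N + 8)^4 * ((2*M + N + 2) * (2*M - N - 2))^2) = 0 := by
  have hL2 := v.map_sq_sub_four_mul_add_eight_eq_zero hnonneg h2 h1 h3
  have hL3 : v ((2*M + N + 2) * (2*M - N - 2)) = 0 := by
    rw [hL2, smul_zero, eq_comm, nsmul_eq_zero_iff_of_ne_zero two_ne_zero] at h3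
    exact h3
  refine ⟨hL2, hL3, ?_⟩
  rw [v.map_mul, v.map_mul, v.map_pow, v.map_pow, v.map_pow, h2, hL2, hL3]
  simp only [smul_zero, add_zero]

/-- The valuation-theoretic direction of Proposition (prop:goodhyp): with
`L₁ = N + 10`, `L₂ = M² − 4N + 8`, `L₃ = (2M + N + 2)(2M − N − 2)` in a valuation
ring of residue characteristic different from `2`, if `2·v(L₁) ≥ v(L₂)` and
`3·v(L₂) = 2·v(L₃)`, then `v(L₂) = v(L₃) = 0` and hence the discriminant
`Δ(Y) = 2⁴·L₂⁴·L₃²` of the hyperelliptic curve is a unit. -/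
theorem stmt_14 {O : Type*} [CommRing O] {Γ : Type*} [AddCommGroup Γ] [LinearOrder Γ] [IsOrderedAddMonoid Γ]
    (v : AddValuation O (WithTop Γ))
    (hnonneg : ∀ x : O, 0 ≤ v x) (htop : ∀ x : O, v x = ⊤ ↔ x = 0)
    (h2 : v 2 = 0) (M N : O)
    (h1 : v (M^2 - 4*N + 8) ≤ 2 • v (N + 10))
    (h3 : 3 • v (M^2 - 4*N + 8) = 2 • v ((2*M + N + 2) * (2*M - N - 2))) :
    v (M^2 - 4*N + 8) = 0 ∧ v ((2*M + N + 2) * (2*M - N - 2)) = 0 ∧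
      v (2^4 * (M^2 - 4*N + 8)^4 * ((2*M + N + 2) * (2*M - N - 2))^2) = 0 :=
  stmt_14_general v hnonneg h2 M N h1 h3
end
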